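/- arXiv:2605.11554 — 2 statements merged into one kernel-verified Lean document; each statement's English description precedes it below -/
import Mathlib

section
/- Code-length proxy reversal: there exist two probability distributions p, q on a finite product space B × R (with independent coordinates in each) such that H(p) < H(q) (so a likelihood-based compression proxy scores p as more structured/compressible than q), yet the Bayes accuracy for the label h(r) under q strictly exceeds that under p. -/
/-- Shannon entropy of a distribution on a finite type. -/
noncomputable def myEntropy {X : Type*} [Fintype X] (p : X → ℝ) : ℝ :=
  ∑ x, Real.negMulLog (p x)

/-- Bayes accuracy of predicting the observed-label coordinate from the
background and relevance-feature coordinates. -/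
noncomputable def obsBayes {B U : Type*} [Fintype B] [Fintype U]
    (μ : B × U × Bool → ℝ) : ℝ :=
  sSup {a | ∃ c : B × U → Bool,
    a = ∑ x : B × U × Bool, μ x * (if c (x.1, x.2.1) = x.2.2 then 1 else 0)}

/-- Code-length proxy reversal: there exist two probability distributions
`p`, `q` on a finite product space `B × R` (with `R` carrying a relevance
feature and the label, and with the background independent of `R` in each)
such that `H(p) < H(q)` — so a compression proxy scores `p` as more
structured — yet the Bayes accuracy for the label under `q` strictly exceeds
that under `p`. -/
theorem stmt10 :
    ∃ (nB nU : ℕ) (p q : Fin nB × Fin nU × Bool → ℝ),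
      (∀ x, 0 ≤ p x) ∧ (∑ x, p x) = 1 ∧
      (∀ x, 0 ≤ q x) ∧ (∑ x, q x) = 1 ∧
      (∃ (μB : Fin nB → ℝ) (μR : Fin nU × Bool → ℝ),
        ∀ x, p x = μB x.1 * μR x.2) ∧
      (∃ (νB : Fin nB → ℝ) (νR : Fin nU × Bool → ℝ),
        ∀ x, q x = νB x.1 * νR x.2) ∧
      myEntropy p < myEntropy q ∧
      obsBayes p < obsBayes q := by
  refine ⟨2, 1,
    (fun x => (if x.1 = 0 then (1:ℝ) else 0) * (1/2)),
    (fun x => (1/2 : ℝ) * (if x.2.2 then (3/4:ℝ) else (1/4))),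
    ?_, ?_, ?_, ?_, ?_, ?_, ?_, ?_⟩
  · intro x; by_cases h : x.1 = 0 <;> by_cases h2 : x.2.2 <;> simp [h, h2] <;> norm_num
  · simp [Fintype.sum_prod_type, Fin.sum_univ_two, Fin.sum_univ_one]
    norm_num
  · intro x; by_cases h2 : x.2.2 <;> simp [h2] <;> norm_num
  · simp [Fintype.sum_prod_type, Fin.sum_univ_two, Fin.sum_univ_one]
    norm_num
  · exact ⟨fun b => if b = 0 then 1 else 0, fun _ => 1/2, fun x => rfl⟩
  · exact ⟨fun _ => 1/2, fun r => if r.2 then 3/4 else 1/4, fun x => rfl⟩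
  · -- entropy comparison
    have hlog2 : (0:ℝ) < Real.log 2 := Real.log_pos (by norm_num)
    have hlog3 : Real.log 3 < 2 * Real.log 2 := by
      have : Real.log 3 < Real.log 4 := Real.log_lt_log (by norm_num) (by norm_num)
      have h4 : Real.log 4 = 2 * Real.log 2 := by
        rw [show (4:ℝ) = 2^2 by norm_num, Real.log_pow]; ring
      linarith
    have e1 : Real.log (1/2 : ℝ) = -Real.log 2 := by
      rw [Real.log_div one_ne_zero (by norm_num), Real.log_one]; ring
    have e2 : Real.log (3/8 : ℝ) = Real.log 3 - 3 * Real.log 2 := by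
      rw [Real.log_div (by norm_num) (by norm_num),
        show (8:ℝ) = 2^3 by norm_num, Real.log_pow]; push_cast; ring
    have e3 : Real.log (1/8 : ℝ) = -(3 * Real.log 2) := by
      rw [Real.log_div one_ne_zero (by norm_num), Real.log_one,
        show (8:ℝ) = 2^3 by norm_num, Real.log_pow]; push_cast; ring
    simp only [myEntropy, Fintype.sum_prod_type, Fin.sum_univ_two, Fin.sum_univ_one]
    simp [Real.negMulLog]
    norm_num
    rw [e2, e3]
    nlinarith
  · -- Bayes comparison
    have hp : obsBayes (fun x : Fin 2 × Fin 1 × Bool =>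
        (if x.1 = 0 then (1:ℝ) else 0) * (1/2)) ≤ 1/2 := by
      apply Real.sSup_le
      · rintro a ⟨c, rfl⟩
        simp only [Fintype.sum_prod_type, Fin.sum_univ_two, Fin.sum_univ_one,
          Fintype.sum_bool]
        cases h0 : c (0, 0) <;> cases h1 : c (1, 0) <;>
          simp [h0, h1] <;> norm_num
      · norm_num
    have hq : (3/4 : ℝ) ≤ obsBayes (fun x : Fin 2 × Fin 1 × Bool =>
        (1/2 : ℝ) * (if x.2.2 then (3/4:ℝ) else (1/4))) := by
      apply le_csSup
      · refine ⟨1, ?_⟩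
        rintro a ⟨c, rfl⟩
        calc ∑ x : Fin 2 × Fin 1 × Bool,
              (1/2 : ℝ) * (if x.2.2 then (3/4:ℝ) else (1/4)) *
                (if c (x.1, x.2.1) = x.2.2 then 1 else 0)
            ≤ ∑ x : Fin 2 × Fin 1 × Bool,
              (1/2 : ℝ) * (if x.2.2 then (3/4:ℝ) else (1/4)) := by
              apply Finset.sum_le_sum
              intro x _
              by_cases h2 : x.2.2 <;> simp [h2] <;> split_ifs <;> norm_num
          _ = 1 := by
              simp [Fintype.sum_prod_type, Fin.sum_univ_two, Fin.sum_univ_one]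
              norm_num
      · refine ⟨fun _ => true, ?_⟩
        simp [Fintype.sum_prod_type, Fin.sum_univ_two, Fin.sum_univ_one]
    calc obsBayes _ ≤ 1/2 := hp
      _ < 3/4 := by norm_num
      _ ≤ _ := hq
end

section
/- If a real-valued proxy S on distributions satisfies S(p) = F(H(p)) for some strictly decreasing function F of the entropy H, and the task metric equals Bayes accuracy for a label independent of a designated background coordinate, then S cannot be rank-aligned with the task metric over all pairs of distributions: there exist p, q with S(p) > S(q) and task metric of q exceeding that of p. -/
noncomputable def myP : Fin 4 × Bool × Bool → ℝ :=
  fun x => (if x.1 = 0 then (1:ℝ) else 0) * (if x.2.1 = false then (1:ℝ)/2 else 0)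

noncomputable def myQ : Fin 4 × Bool × Bool → ℝ :=
  fun x => (1/4 : ℝ) * (if x.2.1 = x.2.2 then (1:ℝ)/2 else 0)

lemma myP_acc (c : Fin 4 × Bool → Bool) :
    (∑ x : Fin 4 × Bool × Bool, myP x * (if c (x.1, x.2.1) = x.2.2 then 1 else 0)) = 1/2 := by
  rw [Fintype.sum_prod_type]
  simp only [Fin.sum_univ_four, Fintype.sum_prod_type, Fintype.sum_bool, myP]
  cases h : c (0, false) <;> simp [h]

lemma myQ_acc :
    (∑ x : Fin 4 × Bool × Bool, myQ x * (if (fun y : Fin 4 × Bool => y.2) (x.1, x.2.1) = x.2.2 then 1 else 0)) = 1 := by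
  rw [Fintype.sum_prod_type]
  simp only [Fin.sum_univ_four, Fintype.sum_prod_type, Fintype.sum_bool, myQ]
  norm_num

lemma obsBayes_bddAbove {B U : Type*} [Fintype B] [Fintype U]
    (μ : B × U × Bool → ℝ) (hμ : ∀ x, 0 ≤ μ x) (hs : (∑ x, μ x) = 1) :
    BddAbove {a | ∃ c : B × U → Bool,
      a = ∑ x : B × U × Bool, μ x * (if c (x.1, x.2.1) = x.2.2 then 1 else 0)} := by
  refine ⟨1, ?_⟩
  rintro a ⟨c, rfl⟩
  calc (∑ x : B × U × Bool, μ x * (if c (x.1, x.2.1) = x.2.2 then 1 else 0))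
      ≤ ∑ x : B × U × Bool, μ x := by
        apply Finset.sum_le_sum
        intro i _
        have := hμ i
        split <;> nlinarith
    _ = 1 := hs

/-- If a proxy is `S = F ∘ H` for a strictly decreasing `F` of the entropy,
and the task metric is Bayes accuracy for a label independent of the
background coordinate, then the proxy is not rank-aligned with the task
metric: there exist probability distributions `p`, `q` (with background
independent of the relevance/label part) with `S(p) > S(q)` and task metric of
`q` exceeding that of `p`. -/
theorem stmt12 (F : ℝ → ℝ) (hF : StrictAnti F) :
    ∃ p q : Fin 4 × Bool × Bool → ℝ,
      (∀ x, 0 ≤ p x) ∧ (∑ x, p x) = 1 ∧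
      (∀ x, 0 ≤ q x) ∧ (∑ x, q x) = 1 ∧
      (∃ (μB : Fin 4 → ℝ) (μR : Bool × Bool → ℝ), ∀ x, p x = μB x.1 * μR x.2) ∧
      (∃ (νB : Fin 4 → ℝ) (νR : Bool × Bool → ℝ), ∀ x, q x = νB x.1 * νR x.2) ∧
      F (myEntropy p) > F (myEntropy q) ∧
      obsBayes q > obsBayes p := by
  refine ⟨myP, myQ, ?_, ?_, ?_, ?_, ?_, ?_, ?_, ?_⟩
  · intro x; unfold myP; split <;> split <;> norm_num
  · rw [Fintype.sum_prod_type]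
    simp only [Fin.sum_univ_four, Fintype.sum_prod_type, Fintype.sum_bool, myP]
    norm_num [show ((2:Fin 4) = 0) ↔ False from by decide, show ((3:Fin 4) = 0) ↔ False from by decide]
  · intro x; unfold myQ; split <;> norm_num
  · rw [Fintype.sum_prod_type]
    simp only [Fin.sum_univ_four, Fintype.sum_prod_type, Fintype.sum_bool, myQ]
    norm_num
  · exact ⟨fun b => if b = 0 then 1 else 0, fun r => if r.1 = false then 1/2 else 0,
      fun x => rfl⟩
  · exact ⟨fun _ => 1/4, fun r => if r.1 = r.2 then 1/2 else 0, fun x => rfl⟩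
  · apply hF
    have hp : myEntropy myP = Real.log 2 := by
      unfold myEntropy
      rw [Fintype.sum_prod_type]
      simp only [Fin.sum_univ_four, Fintype.sum_prod_type, Fintype.sum_bool, myP]
      norm_num [show ((2:Fin 4) = 0) ↔ False from by decide, show ((3:Fin 4) = 0) ↔ False from by decide, Real.negMulLog, Real.log_div, Real.log_inv]
      ring
    have hq : myEntropy myQ = Real.log 8 := by
      unfold myEntropy
      rw [Fintype.sum_prod_type]
      simp only [Fin.sum_univ_four, Fintype.sum_prod_type, Fintype.sum_bool, myQ]
      norm_num [Real.negMulLog, Real.log_div, Real.log_inv]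
      rw [show (8:ℝ) = 2^3 by norm_num, Real.log_pow]
      push_cast
      ring
    rw [hp, hq]
    exact Real.log_lt_log (by norm_num) (by norm_num)
  · have hP1 : (∀ x, 0 ≤ myP x) := by
      intro x; unfold myP; split <;> split <;> norm_num
    have hQ1 : (∀ x, 0 ≤ myQ x) := by
      intro x; unfold myQ; split <;> norm_num
    have hPs : (∑ x, myP x) = 1 := by
      rw [Fintype.sum_prod_type]
      simp only [Fin.sum_univ_four, Fintype.sum_prod_type, Fintype.sum_bool, myP]
      norm_num [show ((2:Fin 4) = 0) ↔ False from by decide, show ((3:Fin 4) = 0) ↔ False from by decide]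
    have hQs : (∑ x, myQ x) = 1 := by
      rw [Fintype.sum_prod_type]
      simp only [Fin.sum_univ_four, Fintype.sum_prod_type, Fintype.sum_bool, myQ]
      norm_num
    have hp : obsBayes myP = 1/2 := by
      unfold obsBayes
      have : {a | ∃ c : Fin 4 × Bool → Bool,
          a = ∑ x : Fin 4 × Bool × Bool, myP x * (if c (x.1, x.2.1) = x.2.2 then 1 else 0)}
          = {(1/2 : ℝ)} := by
        ext a
        constructor
        · rintro ⟨c, rfl⟩; exact myP_acc c
        · rintro rfl; exact ⟨fun _ => false, by simpa using (myP_acc (fun _ => false)).symm⟩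
      rw [this, csSup_singleton]
    have hq : (1:ℝ) ≤ obsBayes myQ := by
      unfold obsBayes
      apply le_csSup (obsBayes_bddAbove myQ hQ1 hQs)
      exact ⟨fun y => y.2, myQ_acc.symm⟩
    rw [hp]; linarith
end
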